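/- Let (Ω, 𝓕, P) be a probability space, q ∈ [0,1), α ∈ (q−1, 0], K ≥ 0, and let I₁ : (0,∞) → ℝ be measurable with |I₁(z) − z^{q−1}| ≤ K·(1 + z^α) for all z > 0. Let (H_T)_{T>0} be random variables with H_T > 0 P-a.s., E[H_T] < ∞, E[H_T^q] < ∞, E[H_T^{1+α}] < ∞ for every T, and sup_{T>0} E[H_T] < ∞; let x ∈ ℝ and λ₁(T), λ₂(T) > 0 satisfy E[H_T·I₁(λ₁(T)H_T)] = λ₂(T)^{q−1}·E[H_T^q] = x for every T > 0. Then there exists M ∈ ℝ with M ≤ x, independent of T, such that for every T > 0: E[H_T·|I₁(λ₁(T)H_T) − (λ₂(T)H_T)^{q−1}|] ≤ 2K·(E[H_T] + (x − M)^{α/(q−1)}·E[H_T]^{1−α/(q−1)}). -/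

import Mathlib

/-!
Write the wealth gap as `h (I₁(λ₁h) - (λ₁h)^(q-1)) + (λ₁^(q-1) - λ₂^(q-1)) h^q`. The second
term has constant sign and, by the two budget equations, expectation equal to minus that of the
first, so the expected gap is at most `2 E|h (I₁(λ₁h) - (λ₁h)^(q-1))| ≤ 2K (E h + λ₁^α E h^(1+α))`.
Lyapunov's inequality with `θ = α/(q-1) ∈ [0,1)` bounds `λ₁^α E h^(1+α)` by `a^θ (E h)^(1-θ)`,
where `a = λ₁^(q-1) E h^q`. The same estimates give `a ≤ x + K C + K C^(1-θ) a^θ` with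
`C ≥ sup_T E H_T`, and since `θ < 1` this bounds `a` uniformly in `T`; `M` is `x` minus that bound.
-/

open MeasureTheory

theorem le_max_of_le_add_mul_rpow {a b c θ : ℝ} (hc : 0 ≤ c) (hθ : θ < 1)
    (ha : a ≤ b + c * a ^ θ) : a ≤ max (2 * b) ((2 * c) ^ (1 - θ)⁻¹) := by
  rcases le_or_gt a ((2 * c) ^ (1 - θ)⁻¹) with hle | hlt
  · exact hle.trans (le_max_right _ _)
  have hθ' : 0 < 1 - θ := by linarith
  have ha0 : 0 < a := lt_of_le_of_lt (by positivity) hlt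
  have hpow : 2 * c < a ^ (1 - θ) := by
    have := Real.rpow_lt_rpow (by positivity) hlt hθ'
    rwa [← Real.rpow_mul (by positivity), inv_mul_cancel₀ hθ'.ne', Real.rpow_one] at this
  have hsplit : a = a ^ (1 - θ) * a ^ θ := by
    rw [← Real.rpow_add ha0, sub_add_cancel, Real.rpow_one]
  have hsmall : 2 * c * a ^ θ < a := by
    calc 2 * c * a ^ θ < a ^ (1 - θ) * a ^ θ :=
          mul_lt_mul_of_pos_right hpow (Real.rpow_pos_of_pos ha0 θ)
      _ = a := hsplit.symm
  exact le_max_of_le_left (by linarith)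

theorem mul_mul_rpow_sub_one {l y : ℝ} (q : ℝ) (hl : 0 ≤ l) (hy : 0 < y) :
    y * (l * y) ^ (q - 1) = l ^ (q - 1) * y ^ q := by
  rw [Real.mul_rpow hl hy.le, Real.rpow_sub_one hy.ne']
  field_simp

theorem mul_one_add_mul_rpow {l y : ℝ} (α : ℝ) (hl : 0 ≤ l) (hy : 0 < y) :
    y * (1 + (l * y) ^ α) = y + l ^ α * y ^ (1 + α) := by
  rw [Real.mul_rpow hl hy.le, Real.rpow_add hy, Real.rpow_one]
  ring

theorem abs_mul_sub_rpow_le {q α K l y : ℝ} {I : ℝ → ℝ}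
    (hI : ∀ z : ℝ, 0 < z → |I z - z ^ (q - 1)| ≤ K * (1 + z ^ α))
    (hl : 0 < l) (hy : 0 < y) :
    |y * (I (l * y) - (l * y) ^ (q - 1))| ≤ K * (y + l ^ α * y ^ (1 + α)) := by
  rw [abs_mul, abs_of_pos hy, ← mul_one_add_mul_rpow α hl.le hy, mul_left_comm]
  exact mul_le_mul_of_nonneg_left (hI _ (mul_pos hl hy)) hy.le

section

variable {Ω : Type*} [MeasurableSpace Ω] {μ : Measure Ω}

theorem integral_rpow_mul_rpow_le {f g : Ω → ℝ} (hf : Integrable f μ) (hg : Integrable g μ)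
    (hf0 : 0 ≤ᵐ[μ] f) (hg0 : 0 ≤ᵐ[μ] g) {p r : ℝ} (hp : 0 ≤ p) (hr : 0 ≤ r) (hpr : p + r = 1) :
    ∫ ω, f ω ^ p * g ω ^ r ∂μ ≤ (∫ ω, f ω ∂μ) ^ p * (∫ ω, g ω ∂μ) ^ r := by
  have hfg0 : 0 ≤ᵐ[μ] fun ω => f ω ^ p * g ω ^ r := by
    filter_upwards [hf0, hg0] with ω hfω hgω
    exact mul_nonneg (Real.rpow_nonneg hfω p) (Real.rpow_nonneg hgω r)
  have hmeas : AEStronglyMeasurable (fun ω => f ω ^ p * g ω ^ r) μ :=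
    ((hf.aemeasurable.pow_const p).mul (hg.aemeasurable.pow_const r)).aestronglyMeasurable
  rw [integral_eq_lintegral_of_nonneg_ae hfg0 hmeas, integral_eq_lintegral_of_nonneg_ae hf0 hf.1,
    integral_eq_lintegral_of_nonneg_ae hg0 hg.1, ENNReal.toReal_rpow, ENNReal.toReal_rpow,
    ← ENNReal.toReal_mul]
  refine ENNReal.toReal_mono (ENNReal.mul_ne_top
    (ENNReal.rpow_ne_top_of_nonneg hp hf.lintegral_lt_top.ne)
    (ENNReal.rpow_ne_top_of_nonneg hr hg.lintegral_lt_top.ne)) ?_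
  calc ∫⁻ ω, ENNReal.ofReal (f ω ^ p * g ω ^ r) ∂μ
      = ∫⁻ ω, ENNReal.ofReal (f ω) ^ p * ENNReal.ofReal (g ω) ^ r ∂μ := by
        refine lintegral_congr_ae ?_
        filter_upwards [hf0, hg0] with ω hfω hgω
        rw [ENNReal.ofReal_mul (Real.rpow_nonneg hfω p), ENNReal.ofReal_rpow_of_nonneg hfω hp,
          ENNReal.ofReal_rpow_of_nonneg hgω hr]
    _ ≤ _ := ENNReal.lintegral_mul_norm_pow_le hf.aemeasurable.ennreal_ofReal
        hg.aemeasurable.ennreal_ofReal hp hr hpr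

theorem integral_rpow_interpolation_le {h : Ω → ℝ} (hpos : ∀ᵐ ω ∂μ, 0 < h ω) {s t θ : ℝ}
    (hs : Integrable (fun ω => h ω ^ s) μ) (ht : Integrable (fun ω => h ω ^ t) μ)
    (hθ0 : 0 ≤ θ) (hθ1 : θ ≤ 1) :
    ∫ ω, h ω ^ (θ * s + (1 - θ) * t) ∂μ ≤
      (∫ ω, h ω ^ s ∂μ) ^ θ * (∫ ω, h ω ^ t ∂μ) ^ (1 - θ) := by
  calc ∫ ω, h ω ^ (θ * s + (1 - θ) * t) ∂μ
      = ∫ ω, (h ω ^ s) ^ θ * (h ω ^ t) ^ (1 - θ) ∂μ := by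
        refine integral_congr_ae ?_
        filter_upwards [hpos] with ω hω
        rw [← Real.rpow_mul hω.le, ← Real.rpow_mul hω.le, ← Real.rpow_add hω, mul_comm s,
          mul_comm t]
    _ ≤ _ := integral_rpow_mul_rpow_le hs ht
        (hpos.mono fun ω hω => (Real.rpow_pos_of_pos hω s).le)
        (hpos.mono fun ω hω => (Real.rpow_pos_of_pos hω t).le) hθ0 (by linarith) (by ring)

theorem integral_abs_add_const_mul_le {A G : Ω → ℝ} (hA : Integrable A μ) (hG : Integrable G μ)
    (hG0 : 0 ≤ᵐ[μ] G) {c : ℝ} (h0 : ∫ ω, (A ω + c * G ω) ∂μ = 0) :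
    ∫ ω, |A ω + c * G ω| ∂μ ≤ 2 * ∫ ω, |A ω| ∂μ := by
  have hcG : Integrable (fun ω => c * G ω) μ := hG.const_mul c
  have hshift : |∫ ω, c * G ω ∂μ| = |∫ ω, A ω ∂μ| := by
    rw [integral_add hA hcG] at h0
    rw [eq_neg_of_add_eq_zero_right h0, abs_neg]
  have habs_cG : ∫ ω, |c * G ω| ∂μ = |∫ ω, c * G ω ∂μ| := by
    rw [integral_const_mul, abs_mul, abs_of_nonneg (integral_nonneg_of_ae hG0),
      ← integral_const_mul]
    refine integral_congr_ae ?_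
    filter_upwards [hG0] with ω hω
    rw [abs_mul, abs_of_nonneg hω]
  calc ∫ ω, |A ω + c * G ω| ∂μ ≤ ∫ ω, (|A ω| + |c * G ω|) ∂μ :=
        integral_mono (hA.add hcG).abs (hA.abs.add hcG.abs) fun ω => abs_add_le _ _
    _ = ∫ ω, |A ω| ∂μ + |∫ ω, A ω ∂μ| := by
        rw [integral_add hA.abs hcG.abs, habs_cG, hshift]
    _ ≤ 2 * ∫ ω, |A ω| ∂μ := by linarith [abs_integral_le_integral_abs (f := A) (μ := μ)]

variable {q α K : ℝ} {I : ℝ → ℝ} {h : Ω → ℝ} {l l₂ : ℝ}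

theorem rpow_mul_integral_rpow_le (hpos : ∀ᵐ ω ∂μ, 0 < h ω) (h_int : Integrable h μ)
    (hq_int : Integrable (fun ω => h ω ^ q) μ) (hl : 0 < l) {θ : ℝ} (hθ0 : 0 ≤ θ) (hθ1 : θ ≤ 1)
    (hα : α = θ * (q - 1)) :
    l ^ α * ∫ ω, h ω ^ (1 + α) ∂μ ≤
      (l ^ (q - 1) * ∫ ω, h ω ^ q ∂μ) ^ θ * (∫ ω, h ω ∂μ) ^ (1 - θ) := by
  have hinterp := integral_rpow_interpolation_le (t := 1) hpos hq_int
    (by simpa only [Real.rpow_one] using h_int) hθ0 hθ1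
  rw [show θ * q + (1 - θ) * 1 = 1 + α by rw [hα]; ring] at hinterp
  simp only [Real.rpow_one] at hinterp
  rw [Real.mul_rpow (Real.rpow_nonneg hl.le _)
      (integral_nonneg_of_ae (hpos.mono fun ω hω => (Real.rpow_pos_of_pos hω q).le)),
    ← Real.rpow_mul hl.le, mul_comm (q - 1), ← hα, mul_assoc]
  exact mul_le_mul_of_nonneg_left hinterp (Real.rpow_nonneg hl.le _)

variable (hI_meas : Measurable I) (hI : ∀ z : ℝ, 0 < z → |I z - z ^ (q - 1)| ≤ K * (1 + z ^ α))
  (hpos : ∀ᵐ ω ∂μ, 0 < h ω) (h_int : Integrable h μ)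
  (hα_int : Integrable (fun ω => h ω ^ (1 + α)) μ) (hl : 0 < l)
include hI_meas hI hpos h_int hα_int hl

theorem integrable_mul_sub_rpow :
    Integrable (fun ω => h ω * (I (l * h ω) - (l * h ω) ^ (q - 1))) μ := by
  refine Integrable.mono' ((h_int.add (hα_int.const_mul (l ^ α))).const_mul K) ?_ ?_
  · have hlh := h_int.aemeasurable.const_mul l
    exact (h_int.aemeasurable.mul ((hI_meas.comp_aemeasurable hlh).sub
      (hlh.pow_const _))).aestronglyMeasurable
  · filter_upwards [hpos] with ω hω
    exact abs_mul_sub_rpow_le hI hl hω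

theorem integral_abs_mul_sub_rpow_le :
    ∫ ω, |h ω * (I (l * h ω) - (l * h ω) ^ (q - 1))| ∂μ ≤
      K * (∫ ω, h ω ∂μ + l ^ α * ∫ ω, h ω ^ (1 + α) ∂μ) := by
  rw [← integral_const_mul, ← integral_add h_int (hα_int.const_mul _), ← integral_const_mul]
  refine integral_mono_ae (integrable_mul_sub_rpow hI_meas hI hpos h_int hα_int hl).abs
    ((h_int.add (hα_int.const_mul _)).const_mul K) ?_
  filter_upwards [hpos] with ω hω
  exact abs_mul_sub_rpow_le hI hl hω

variable (hq_int : Integrable (fun ω => h ω ^ q) μ)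
include hq_int

theorem integral_mul_comp_mul_eq_add :
    ∫ ω, h ω * I (l * h ω) ∂μ =
      ∫ ω, h ω * (I (l * h ω) - (l * h ω) ^ (q - 1)) ∂μ + l ^ (q - 1) * ∫ ω, h ω ^ q ∂μ := by
  rw [← integral_const_mul, ← integral_add
    (integrable_mul_sub_rpow hI_meas hI hpos h_int hα_int hl) (hq_int.const_mul _)]
  refine integral_congr_ae ?_
  filter_upwards [hpos] with ω hω
  rw [mul_sub, mul_mul_rpow_sub_one q hl.le hω]
  ring

theorem integral_mul_abs_sub_rpow_le (hl₂ : 0 < l₂)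
    (hbudget : ∫ ω, h ω * I (l * h ω) ∂μ = l₂ ^ (q - 1) * ∫ ω, h ω ^ q ∂μ) :
    ∫ ω, h ω * |I (l * h ω) - (l₂ * h ω) ^ (q - 1)| ∂μ ≤
      2 * K * (∫ ω, h ω ∂μ + l ^ α * ∫ ω, h ω ^ (1 + α) ∂μ) := by
  have hA := integrable_mul_sub_rpow hI_meas hI hpos h_int hα_int hl
  have hsplit := integral_mul_comp_mul_eq_add hI_meas hI hpos h_int hα_int hl hq_int
  calc ∫ ω, h ω * |I (l * h ω) - (l₂ * h ω) ^ (q - 1)| ∂μ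
      = ∫ ω, |h ω * (I (l * h ω) - (l * h ω) ^ (q - 1)) +
          (l ^ (q - 1) - l₂ ^ (q - 1)) * h ω ^ q| ∂μ := by
        refine integral_congr_ae ?_
        filter_upwards [hpos] with ω hω
        have hdecomp : h ω * (I (l * h ω) - (l₂ * h ω) ^ (q - 1)) =
            h ω * (I (l * h ω) - (l * h ω) ^ (q - 1)) + (l ^ (q - 1) - l₂ ^ (q - 1)) * h ω ^ q := by
          rw [mul_sub, mul_sub, mul_mul_rpow_sub_one q hl.le hω, mul_mul_rpow_sub_one q hl₂.le hω]
          ring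
        rw [← hdecomp, abs_mul, abs_of_pos hω]
    _ ≤ 2 * ∫ ω, |h ω * (I (l * h ω) - (l * h ω) ^ (q - 1))| ∂μ := by
        refine integral_abs_add_const_mul_le hA hq_int
          (hpos.mono fun ω hω => (Real.rpow_pos_of_pos hω q).le) ?_
        rw [integral_add hA (hq_int.const_mul _), integral_const_mul]
        linarith
    _ ≤ _ := by
        rw [mul_assoc]
        gcongr
        exact integral_abs_mul_sub_rpow_le hI_meas hI hpos h_int hα_int hl

theorem rpow_mul_integral_rpow_le_add
    (hbudget : ∫ ω, h ω * I (l * h ω) ∂μ = l₂ ^ (q - 1) * ∫ ω, h ω ^ q ∂μ) :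
    l ^ (q - 1) * ∫ ω, h ω ^ q ∂μ ≤
      l₂ ^ (q - 1) * ∫ ω, h ω ^ q ∂μ + K * (∫ ω, h ω ∂μ + l ^ α * ∫ ω, h ω ^ (1 + α) ∂μ) := by
  have hsplit := integral_mul_comp_mul_eq_add hI_meas hI hpos h_int hα_int hl hq_int
  have habs := integral_abs_mul_sub_rpow_le hI_meas hI hpos h_int hα_int hl
  have hA_lower := neg_le_of_abs_le (abs_integral_le_integral_abs (μ := μ)
    (f := fun ω => h ω * (I (l * h ω) - (l * h ω) ^ (q - 1))))
  linarith

variable {θ : ℝ} (hθ0 : 0 ≤ θ) (hα : α = θ * (q - 1))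
include hθ0 hα

theorem integral_mul_abs_sub_rpow_le_interpolated (hK : 0 ≤ K) (hl₂ : 0 < l₂) (hθ1 : θ ≤ 1)
    (hbudget : ∫ ω, h ω * I (l * h ω) ∂μ = l₂ ^ (q - 1) * ∫ ω, h ω ^ q ∂μ) :
    ∫ ω, h ω * |I (l * h ω) - (l₂ * h ω) ^ (q - 1)| ∂μ ≤
      2 * K * (∫ ω, h ω ∂μ + (l ^ (q - 1) * ∫ ω, h ω ^ q ∂μ) ^ θ * (∫ ω, h ω ∂μ) ^ (1 - θ)) := by
  refine (integral_mul_abs_sub_rpow_le hI_meas hI hpos h_int hα_int hl hq_int hl₂ hbudget).trans ?_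
  exact mul_le_mul_of_nonneg_left
    (add_le_add le_rfl (rpow_mul_integral_rpow_le hpos h_int hq_int hl hθ0 hθ1 hα)) (by positivity)

theorem rpow_mul_integral_rpow_le_max (hK : 0 ≤ K) (hθ1 : θ < 1) {C x : ℝ}
    (hC : ∫ ω, h ω ∂μ ≤ C)
    (hbudget₁ : ∫ ω, h ω * I (l * h ω) ∂μ = l₂ ^ (q - 1) * ∫ ω, h ω ^ q ∂μ)
    (hbudget₂ : l₂ ^ (q - 1) * ∫ ω, h ω ^ q ∂μ = x) :
    l ^ (q - 1) * ∫ ω, h ω ^ q ∂μ ≤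
      max (2 * (x + K * C)) ((2 * (K * C ^ (1 - θ))) ^ (1 - θ)⁻¹) := by
  set a := l ^ (q - 1) * ∫ ω, h ω ^ q ∂μ
  have hE0 : 0 ≤ ∫ ω, h ω ∂μ := integral_nonneg_of_ae (hpos.mono fun ω hω => hω.le)
  have ha0 : 0 ≤ a := mul_nonneg (Real.rpow_nonneg hl.le _)
    (integral_nonneg_of_ae (hpos.mono fun ω hω => (Real.rpow_pos_of_pos hω q).le))
  have hmult := rpow_mul_integral_rpow_le_add hI_meas hI hpos h_int hα_int hl hq_int hbudget₁
  have hinterp := rpow_mul_integral_rpow_le hpos h_int hq_int hl hθ0 hθ1.le hα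
  have hEC : (∫ ω, h ω ∂μ) ^ (1 - θ) ≤ C ^ (1 - θ) := Real.rpow_le_rpow hE0 hC (by linarith)
  refine le_max_of_le_add_mul_rpow (mul_nonneg hK (Real.rpow_nonneg (hE0.trans hC) _)) hθ1 ?_
  calc a ≤ x + K * (∫ ω, h ω ∂μ + a ^ θ * (∫ ω, h ω ∂μ) ^ (1 - θ)) := by
        rw [← hbudget₂]
        exact hmult.trans (add_le_add le_rfl (mul_le_mul_of_nonneg_left
          (add_le_add le_rfl hinterp) hK))
    _ ≤ x + K * (C + a ^ θ * C ^ (1 - θ)) := by gcongr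
    _ = x + K * C + K * C ^ (1 - θ) * a ^ θ := by ring

end

theorem turnpike_wealth_rate_general
    {Ω : Type*} [MeasurableSpace Ω] (P : Measure Ω)
    (q α : ℝ) (hq1 : q < 1) (hα1 : q - 1 < α) (hα2 : α ≤ 0)
    (K : ℝ) (hK : 0 ≤ K)
    (I₁ : ℝ → ℝ) (hI₁meas : Measurable I₁)
    (hI₁ : ∀ z : ℝ, 0 < z → |I₁ z - z ^ (q - 1)| ≤ K * (1 + z ^ α))
    (H : ℝ → Ω → ℝ) (lam₁ lam₂ : ℝ → ℝ) (x : ℝ)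
    (hHpos : ∀ T : ℝ, 0 < T → ∀ᵐ ω ∂P, 0 < H T ω)
    (hInt1 : ∀ T : ℝ, 0 < T → Integrable (H T) P)
    (hIntq : ∀ T : ℝ, 0 < T → Integrable (fun ω => H T ω ^ q) P)
    (hIntα : ∀ T : ℝ, 0 < T → Integrable (fun ω => H T ω ^ (1 + α)) P)
    (hsup : ∃ Csup : ℝ, ∀ T : ℝ, 0 < T → ∫ ω, H T ω ∂P ≤ Csup)
    (hlam₁ : ∀ T : ℝ, 0 < T → 0 < lam₁ T)
    (hlam₂ : ∀ T : ℝ, 0 < T → 0 < lam₂ T)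
    (hbudget₁ : ∀ T : ℝ, 0 < T →
      (∫ ω, H T ω * I₁ (lam₁ T * H T ω) ∂P) = lam₂ T ^ (q - 1) * ∫ ω, H T ω ^ q ∂P)
    (hbudget₂ : ∀ T : ℝ, 0 < T → lam₂ T ^ (q - 1) * (∫ ω, H T ω ^ q ∂P) = x) :
    ∃ M : ℝ, M ≤ x ∧ ∀ T : ℝ, 0 < T →
      (∫ ω, H T ω * |I₁ (lam₁ T * H T ω) - (lam₂ T * H T ω) ^ (q - 1)| ∂P) ≤
        2 * K * ((∫ ω, H T ω ∂P) +
          (x - M) ^ (α / (q - 1)) * (∫ ω, H T ω ∂P) ^ (1 - α / (q - 1))) := by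
  obtain ⟨C, hC⟩ := hsup
  set θ := α / (q - 1) with hθ
  have hα : α = θ * (q - 1) := (div_mul_cancel₀ α (by linarith)).symm
  have hθ0 : 0 ≤ θ := div_nonneg_of_nonpos hα2 (by linarith)
  have hθ1 : θ < 1 := by rw [hθ, div_lt_one_of_neg (by linarith)]; linarith
  set R := max (2 * (x + K * max C 0)) ((2 * (K * max C 0 ^ (1 - θ))) ^ (1 - θ)⁻¹)
  have hR : 0 ≤ R := le_max_of_le_right (Real.rpow_nonneg (by positivity) _)
  refine ⟨x - R, by linarith, fun T hT => ?_⟩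
  have hE0 : 0 ≤ ∫ ω, H T ω ∂P := integral_nonneg_of_ae ((hHpos T hT).mono fun ω hω => hω.le)
  have ha0 : 0 ≤ lam₁ T ^ (q - 1) * ∫ ω, H T ω ^ q ∂P := mul_nonneg
    (Real.rpow_nonneg (hlam₁ T hT).le _)
    (integral_nonneg_of_ae ((hHpos T hT).mono fun ω hω => (Real.rpow_pos_of_pos hω q).le))
  rw [sub_sub_cancel]
  calc _ ≤ 2 * K * (∫ ω, H T ω ∂P +
        (lam₁ T ^ (q - 1) * ∫ ω, H T ω ^ q ∂P) ^ θ * (∫ ω, H T ω ∂P) ^ (1 - θ)) :=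
        integral_mul_abs_sub_rpow_le_interpolated hI₁meas hI₁ (hHpos T hT) (hInt1 T hT)
          (hIntα T hT) (hlam₁ T hT) (hIntq T hT) hθ0 hα hK (hlam₂ T hT) hθ1.le (hbudget₁ T hT)
    _ ≤ _ := by
        gcongr
        exact rpow_mul_integral_rpow_le_max hI₁meas hI₁ (hHpos T hT) (hInt1 T hT) (hIntα T hT)
          (hlam₁ T hT) (hIntq T hT) hθ0 hα hK hθ1 ((hC T hT).trans (le_max_left _ _))
          (hbudget₁ T hT) (hbudget₂ T hT)

/-- Theorem 2.10 (turnpike for optimal wealth processes): there exists `M ≤ x`,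
independent of the horizon `T`, such that for all `T > 0`,
`E[H_T |I₁(λ₁(T)H_T) - (λ₂(T)H_T)^{q-1}|]
  ≤ 2K(E[H_T] + (x-M)^{α/(q-1)} E[H_T]^{1-α/(q-1)})`. -/
theorem turnpike_wealth_rate
    {Ω : Type*} [MeasurableSpace Ω] (P : Measure Ω) [IsProbabilityMeasure P]
    (q α : ℝ) (hq0 : 0 ≤ q) (hq1 : q < 1) (hα1 : q - 1 < α) (hα2 : α ≤ 0)
    (K : ℝ) (hK : 0 ≤ K)
    (I₁ : ℝ → ℝ) (hI₁meas : Measurable I₁)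
    (hI₁ : ∀ z : ℝ, 0 < z → |I₁ z - z ^ (q - 1)| ≤ K * (1 + z ^ α))
    (H : ℝ → Ω → ℝ) (lam₁ lam₂ : ℝ → ℝ) (x : ℝ)
    (hHmeas : ∀ T : ℝ, 0 < T → Measurable (H T))
    (hHpos : ∀ T : ℝ, 0 < T → ∀ᵐ ω ∂P, 0 < H T ω)
    (hInt1 : ∀ T : ℝ, 0 < T → Integrable (H T) P)
    (hIntq : ∀ T : ℝ, 0 < T → Integrable (fun ω => H T ω ^ q) P)
    (hIntα : ∀ T : ℝ, 0 < T → Integrable (fun ω => H T ω ^ (1 + α)) P)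
    (hsup : ∃ Csup : ℝ, ∀ T : ℝ, 0 < T → ∫ ω, H T ω ∂P ≤ Csup)
    (hlam₁ : ∀ T : ℝ, 0 < T → 0 < lam₁ T)
    (hlam₂ : ∀ T : ℝ, 0 < T → 0 < lam₂ T)
    (hbudget₁ : ∀ T : ℝ, 0 < T →
      (∫ ω, H T ω * I₁ (lam₁ T * H T ω) ∂P) = lam₂ T ^ (q - 1) * ∫ ω, H T ω ^ q ∂P)
    (hbudget₂ : ∀ T : ℝ, 0 < T → lam₂ T ^ (q - 1) * (∫ ω, H T ω ^ q ∂P) = x) :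
    ∃ M : ℝ, M ≤ x ∧ ∀ T : ℝ, 0 < T →
      (∫ ω, H T ω * |I₁ (lam₁ T * H T ω) - (lam₂ T * H T ω) ^ (q - 1)| ∂P) ≤
        2 * K * ((∫ ω, H T ω ∂P) +
          (x - M) ^ (α / (q - 1)) * (∫ ω, H T ω ∂P) ^ (1 - α / (q - 1))) :=
  turnpike_wealth_rate_general P q α hq1 hα1 hα2 K hK I₁ hI₁meas hI₁ H lam₁ lam₂ x hHpos hInt1 hIntq
    hIntα hsup hlam₁ hlam₂ hbudget₁ hbudget₂
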